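/- arXiv:2507.12385 — 2 statements merged into one kernel-verified Lean document; each statement's English description precedes it below -/
import Mathlib

section
/- Let γ₁ = N(0, σ₁²I) and γ₂ = N(0, σ₂²I) be two centered isotropic Gaussian measures on ℝ^d with σ₁, σ₂ > 0, and let f : ℝ^d → ℝ be measurable with f ∈ L^{2p}(γ₁). Let p > 1 and set α = σ₁²/σ₂², and assume α > 1/p. Let m₁ = ∫ f dγ₁. Then Var_{γ₂}(f) ≤ C·‖f − m₁‖²_{L^{2p}(γ₁)}, where C = α^{d/2}·((p−1)/(pα−1))^{d(p−1)/(2p)} and Var_{γ₂}(f) = ∫ (f − ∫f dγ₂)² dγ₂. -/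
/-!
Let `ρ = dγ₂/dγ₁ = α^{d/2} exp(-(1/(2σ₂²) - 1/(2σ₁²))|x|²)`. The variance under `γ₂` is at most
`∫ (f - m₁)² dγ₂ = ∫ (f - m₁)² ρ dγ₁`, and Hölder's inequality with exponents `p` and
`p' = p/(p-1)` bounds this by `‖f - m₁‖²_{L^{2p}(γ₁)} ‖ρ‖_{L^{p'}(γ₁)}`. The last factor is a
Gaussian integral, finite exactly when `1 + p'(α - 1) > 0`, i.e. `pα > 1`, and it equals the
constant `α^{d/2} ((p-1)/(pα-1))^{d(p-1)/(2p)}`.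
-/

open MeasureTheory Real

noncomputable section

abbrev Ed (d : ℕ) := EuclideanSpace ℝ (Fin d)

/-- The Lebesgue density of the centered isotropic Gaussian measure `N(0, σ²I)` on `ℝ^d`. -/
def gaussDen (d : ℕ) (σ : ℝ) (x : Ed d) : ℝ :=
  (2 * π * σ ^ 2) ^ (-(d : ℝ) / 2) * Real.exp (-‖x‖ ^ 2 / (2 * σ ^ 2))

/-- The centered isotropic Gaussian measure `N(0, σ²I)` on `ℝ^d`. -/
def gaussMeasure (d : ℕ) (σ : ℝ) : Measure (Ed d) :=
  volume.withDensity fun x => ENNReal.ofReal (gaussDen d σ x)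

open scoped ENNReal

section General

variable {Ω : Type*} [MeasurableSpace Ω] {μ : Measure Ω}

lemma integral_sub_integral_sq_le [IsProbabilityMeasure μ] {f : Ω → ℝ}
    (hf : AEStronglyMeasurable f μ) (a : ℝ) :
    ∫ x, (f x - ∫ y, f y ∂μ) ^ 2 ∂μ ≤ ∫ x, (f x - a) ^ 2 ∂μ := by
  rw [← ProbabilityTheory.variance_eq_integral hf.aemeasurable,
    ← ProbabilityTheory.variance_sub_const hf a]
  exact ProbabilityTheory.variance_le_expectation_sq (by fun_prop)

lemma integral_le_of_lintegral_ofReal_le {f : Ω → ℝ} {K : ℝ} (hf_nonneg : 0 ≤ᵐ[μ] f)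
    (hf : AEStronglyMeasurable f μ) (hK : 0 ≤ K)
    (h : ∫⁻ x, ENNReal.ofReal (f x) ∂μ ≤ ENNReal.ofReal K) : ∫ x, f x ∂μ ≤ K := by
  rw [integral_eq_lintegral_of_nonneg_ae hf_nonneg hf]
  exact ENNReal.toReal_le_of_le_ofReal hK h

lemma lintegral_withDensity_le_lintegral_rpow_mul_lintegral_rpow {p q : ℝ}
    (hpq : p.HolderConjugate q) {f ρ : Ω → ℝ≥0∞} (hf : AEMeasurable f μ) (hρ : AEMeasurable ρ μ) :
    ∫⁻ x, f x ∂μ.withDensity ρ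
      ≤ (∫⁻ x, f x ^ p ∂μ) ^ (1 / p) * (∫⁻ x, ρ x ^ q ∂μ) ^ (1 / q) := by
  rw [lintegral_withDensity_eq_lintegral_mul₀ hρ hf, mul_comm]
  exact ENNReal.lintegral_mul_le_Lp_mul_Lq μ hpq hf hρ

lemma lintegral_ofReal_sq_rpow_eq_ofReal_integral {g : Ω → ℝ} {p : ℝ} (hp : 0 < p)
    (hg : MemLp g (ENNReal.ofReal (2 * p)) μ) :
    ∫⁻ x, ENNReal.ofReal (g x ^ 2) ^ p ∂μ = ENNReal.ofReal (∫ x, |g x| ^ (2 * p) ∂μ) := by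
  have hint : Integrable (fun x => |g x| ^ (2 * p)) μ := by
    simpa [ENNReal.toReal_ofReal (by positivity : 0 ≤ 2 * p), hp.le] using
      hg.integrable_norm_rpow (by simp [hp]) ENNReal.ofReal_ne_top
  rw [ofReal_integral_eq_lintegral_ofReal hint (ae_of_all _ fun x => by positivity)]
  refine lintegral_congr fun x => ?_
  rw [ENNReal.ofReal_rpow_of_nonneg (sq_nonneg _) hp.le, ← sq_abs, ← rpow_two,
    ← rpow_mul (abs_nonneg _)]

end General

lemma one_add_conjExponent_mul_sub_one {p : ℝ} (hp : 1 < p) (α : ℝ) :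
    1 + p.conjExponent * (α - 1) = (p * α - 1) / (p - 1) := by
  have : p - 1 ≠ 0 := by linarith
  rw [Real.conjExponent]
  field_simp
  ring

lemma rpow_conjExponent_moment_eq {p α : ℝ} (d : ℝ) (hp : 1 < p) (hα : 0 < α)
    (hpα : 1 < p * α) :
    (α ^ (d / 2 * p.conjExponent) * (1 + p.conjExponent * (α - 1)) ^ (-d / 2))
        ^ (1 / p.conjExponent)
      = α ^ (d / 2) * ((p - 1) / (p * α - 1)) ^ (d * (p - 1) / (2 * p)) := by
  have hp1 : 0 < p - 1 := by linarith
  have hr : 0 < (p - 1) / (p * α - 1) := div_pos hp1 (by linarith)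
  have hq0 : p.conjExponent ≠ 0 := (Real.HolderConjugate.conjExponent hp).symm.ne_zero
  rw [one_add_conjExponent_mul_sub_one hp, ← inv_div (p - 1),
    mul_rpow (by positivity) (by positivity), ← rpow_mul hα.le, inv_rpow hr.le, ← rpow_neg hr.le, ← rpow_mul hr.le]
  congr 2
  · field_simp
  · rw [Real.conjExponent]
    field_simp

lemma lintegral_ofReal_exp_neg_mul_sq_norm (d : ℕ) {b : ℝ} (hb : 0 < b) :
    ∫⁻ x : Ed d, ENNReal.ofReal (rexp (-b * ‖x‖ ^ 2))
      = ENNReal.ofReal ((π / b) ^ ((d : ℝ) / 2)) := by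
  have hval : ∫ x : Ed d, rexp (-b * ‖x‖ ^ 2) = (π / b) ^ ((d : ℝ) / 2) := by
    rw [GaussianFourier.integral_rexp_neg_mul_sq_norm hb, finrank_euclideanSpace_fin]
  have hint : Integrable fun x : Ed d => rexp (-b * ‖x‖ ^ 2) :=
    Integrable.of_integral_ne_zero (by rw [hval]; positivity)
  rw [← hval, ofReal_integral_eq_lintegral_ofReal hint (ae_of_all _ fun x => (exp_pos _).le)]

lemma measurable_gaussDen (d : ℕ) (σ : ℝ) : Measurable (gaussDen d σ) := by
  unfold gaussDen
  fun_prop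

lemma gaussDen_pos {d : ℕ} {σ : ℝ} (hσ : 0 < σ) (x : Ed d) : 0 < gaussDen d σ x := by
  unfold gaussDen
  positivity

lemma gaussDen_mul_exp_neg_mul_sq_norm (d : ℕ) (σ b : ℝ) (x : Ed d) :
    gaussDen d σ x * rexp (-b * ‖x‖ ^ 2)
      = (2 * π * σ ^ 2) ^ (-(d : ℝ) / 2) * rexp (-(b + 1 / (2 * σ ^ 2)) * ‖x‖ ^ 2) := by
  rw [gaussDen, mul_assoc, ← exp_add]
  ring_nf

lemma lintegral_exp_neg_mul_sq_norm_gaussMeasure (d : ℕ) {σ b : ℝ} (hσ : 0 < σ)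
    (hb : 0 < 1 + 2 * σ ^ 2 * b) :
    ∫⁻ x, ENNReal.ofReal (rexp (-b * ‖x‖ ^ 2)) ∂gaussMeasure d σ
      = ENNReal.ofReal ((1 + 2 * σ ^ 2 * b) ^ (-(d : ℝ) / 2)) := by
  have hb' : 0 < b + 1 / (2 * σ ^ 2) := by
    have : b + 1 / (2 * σ ^ 2) = (1 + 2 * σ ^ 2 * b) / (2 * σ ^ 2) := by field_simp; ring
    rw [this]; positivity
  have hπ : 0 < 2 * π * σ ^ 2 := by positivity
  calc ∫⁻ x, ENNReal.ofReal (rexp (-b * ‖x‖ ^ 2)) ∂gaussMeasure d σ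
      = ∫⁻ x, ENNReal.ofReal ((2 * π * σ ^ 2) ^ (-(d : ℝ) / 2)) *
          ENNReal.ofReal (rexp (-(b + 1 / (2 * σ ^ 2)) * ‖x‖ ^ 2)) := by
        rw [gaussMeasure, lintegral_withDensity_eq_lintegral_mul _
          (measurable_gaussDen d σ).ennreal_ofReal (by fun_prop)]
        refine lintegral_congr fun x => ?_
        rw [Pi.mul_apply, ← ENNReal.ofReal_mul (gaussDen_pos hσ x).le,
          gaussDen_mul_exp_neg_mul_sq_norm, ENNReal.ofReal_mul (by positivity)]
    _ = ENNReal.ofReal ((2 * π * σ ^ 2) ^ (-(d : ℝ) / 2) *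
          (π / (b + 1 / (2 * σ ^ 2))) ^ ((d : ℝ) / 2)) := by
        rw [lintegral_const_mul _ (by fun_prop), lintegral_ofReal_exp_neg_mul_sq_norm d hb',
          ENNReal.ofReal_mul (by positivity)]
    _ = ENNReal.ofReal ((1 + 2 * σ ^ 2 * b) ^ (-(d : ℝ) / 2)) := by
        have : π / (b + 1 / (2 * σ ^ 2)) = 2 * π * σ ^ 2 / (1 + 2 * σ ^ 2 * b) := by
          field_simp; ring
        rw [this, div_rpow hπ.le hb.le, neg_div, rpow_neg hπ.le, rpow_neg hb.le]
        field_simp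

lemma isProbabilityMeasure_gaussMeasure (d : ℕ) {σ : ℝ} (hσ : 0 < σ) :
    IsProbabilityMeasure (gaussMeasure d σ) := by
  constructor
  simpa using lintegral_exp_neg_mul_sq_norm_gaussMeasure d (b := 0) hσ (by simp)

def gaussRatio (d : ℕ) (σ₁ σ₂ : ℝ) (x : Ed d) : ℝ :=
  (σ₁ ^ 2 / σ₂ ^ 2) ^ ((d : ℝ) / 2) * rexp (-(1 / (2 * σ₂ ^ 2) - 1 / (2 * σ₁ ^ 2)) * ‖x‖ ^ 2)

lemma gaussDen_mul_gaussRatio (d : ℕ) {σ₁ σ₂ : ℝ} (h₁ : 0 < σ₁) (h₂ : 0 < σ₂) (x : Ed d) :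
    gaussDen d σ₁ x * gaussRatio d σ₁ σ₂ x = gaussDen d σ₂ x := by
  have hπ₁ : 0 < 2 * π * σ₁ ^ 2 := by positivity
  have hπ₂ : 0 < 2 * π * σ₂ ^ 2 := by positivity
  have hconst : (2 * π * σ₁ ^ 2) ^ (-(d : ℝ) / 2) * (σ₁ ^ 2 / σ₂ ^ 2) ^ ((d : ℝ) / 2)
      = (2 * π * σ₂ ^ 2) ^ (-(d : ℝ) / 2) := by
    rw [← mul_div_mul_left (σ₁ ^ 2) (σ₂ ^ 2) (by positivity : 2 * π ≠ 0),
      div_rpow hπ₁.le hπ₂.le, neg_div, rpow_neg hπ₁.le, rpow_neg hπ₂.le]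
    field_simp
  rw [gaussDen, gaussDen, gaussRatio, mul_mul_mul_comm, hconst, ← exp_add]
  congr 2
  field_simp
  ring

lemma gaussMeasure_eq_withDensity_gaussRatio (d : ℕ) {σ₁ σ₂ : ℝ} (h₁ : 0 < σ₁) (h₂ : 0 < σ₂) :
    gaussMeasure d σ₂
      = (gaussMeasure d σ₁).withDensity fun x => ENNReal.ofReal (gaussRatio d σ₁ σ₂ x) := by
  rw [gaussMeasure, gaussMeasure, ← withDensity_mul _ (measurable_gaussDen d σ₁).ennreal_ofReal
    (by unfold gaussRatio; fun_prop)]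
  congr 1
  funext x
  rw [Pi.mul_apply, ← ENNReal.ofReal_mul (gaussDen_pos h₁ x).le, gaussDen_mul_gaussRatio d h₁ h₂]

lemma lintegral_gaussRatio_rpow (d : ℕ) {σ₁ σ₂ q : ℝ} (h₁ : 0 < σ₁) (h₂ : 0 < σ₂)
    (hq : 0 < 1 + q * (σ₁ ^ 2 / σ₂ ^ 2 - 1)) :
    ∫⁻ x, ENNReal.ofReal (gaussRatio d σ₁ σ₂ x) ^ q ∂gaussMeasure d σ₁
      = ENNReal.ofReal ((σ₁ ^ 2 / σ₂ ^ 2) ^ ((d : ℝ) / 2 * q) *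
          (1 + q * (σ₁ ^ 2 / σ₂ ^ 2 - 1)) ^ (-(d : ℝ) / 2)) := by
  set b := q * (1 / (2 * σ₂ ^ 2) - 1 / (2 * σ₁ ^ 2)) with hb_def
  have hb : 1 + 2 * σ₁ ^ 2 * b = 1 + q * (σ₁ ^ 2 / σ₂ ^ 2 - 1) := by
    rw [hb_def]; field_simp
  have hpow : ∀ x, ENNReal.ofReal (gaussRatio d σ₁ σ₂ x) ^ q
      = ENNReal.ofReal ((σ₁ ^ 2 / σ₂ ^ 2) ^ ((d : ℝ) / 2 * q)) *
          ENNReal.ofReal (rexp (-b * ‖x‖ ^ 2)) := by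
    intro x
    rw [ENNReal.ofReal_rpow_of_pos (by unfold gaussRatio; positivity), gaussRatio,
      mul_rpow (by positivity) (exp_pos _).le, ← rpow_mul (by positivity), ← exp_mul,
      ENNReal.ofReal_mul (by positivity)]
    congr 3
    ring
  simp_rw [hpow]
  rw [lintegral_const_mul _ (by fun_prop), lintegral_exp_neg_mul_sq_norm_gaussMeasure d h₁
    (hb ▸ hq), hb, ← ENNReal.ofReal_mul (by positivity)]

lemma lintegral_ofReal_sq_gaussMeasure_le (d : ℕ) {σ₁ σ₂ p : ℝ} (h₁ : 0 < σ₁) (h₂ : 0 < σ₂)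
    (hp : 1 < p) (hpα : 1 < p * (σ₁ ^ 2 / σ₂ ^ 2)) {g : Ed d → ℝ}
    (hg : MemLp g (ENNReal.ofReal (2 * p)) (gaussMeasure d σ₁)) :
    ∫⁻ x, ENNReal.ofReal (g x ^ 2) ∂gaussMeasure d σ₂
      ≤ ENNReal.ofReal ((σ₁ ^ 2 / σ₂ ^ 2) ^ ((d : ℝ) / 2) *
          ((p - 1) / (p * (σ₁ ^ 2 / σ₂ ^ 2) - 1)) ^ ((d : ℝ) * (p - 1) / (2 * p)) *
        (∫ x, |g x| ^ (2 * p) ∂gaussMeasure d σ₁) ^ (1 / p)) := by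
  have hpq := Real.HolderConjugate.conjExponent hp
  have hq : 0 < 1 + p.conjExponent * (σ₁ ^ 2 / σ₂ ^ 2 - 1) := by
    rw [one_add_conjExponent_mul_sub_one hp]
    exact div_pos (by linarith) (by linarith)
  rw [gaussMeasure_eq_withDensity_gaussRatio d h₁ h₂]
  refine (lintegral_withDensity_le_lintegral_rpow_mul_lintegral_rpow hpq
    (hg.1.aemeasurable.pow_const 2).ennreal_ofReal
    (by unfold gaussRatio; fun_prop)).trans_eq ?_
  rw [lintegral_ofReal_sq_rpow_eq_ofReal_integral hpq.pos hg,
    lintegral_gaussRatio_rpow d h₁ h₂ hq,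
    ENNReal.ofReal_rpow_of_nonneg (by positivity) (one_div_nonneg.2 hpq.nonneg),
    ENNReal.ofReal_rpow_of_nonneg (mul_pos (by positivity) (rpow_pos_of_pos hq _)).le
      (one_div_nonneg.2 hpq.symm.nonneg),
    rpow_conjExponent_moment_eq _ hp (by positivity) hpα, ← ENNReal.ofReal_mul (by positivity),
    mul_comm]

/-- **Lemma 3.2 (variance change between Gaussians)**: for `γᵢ = N(0, σᵢ² I)`, `p > 1` and
`α = σ₁²/σ₂² > 1/p`, one has
`Var_{γ₂}(f) ≤ α^{d/2} ((p-1)/(pα-1))^{d(p-1)/(2p)} ‖f - m₁‖²_{L^{2p}(γ₁)}`,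
where `m₁ = ∫ f dγ₁` and `‖f - m₁‖²_{L^{2p}(γ₁)} = (∫ |f - m₁|^{2p} dγ₁)^{1/p}`. -/
theorem variance_change_gaussian (d : ℕ) (σ₁ σ₂ : ℝ) (h₁ : 0 < σ₁) (h₂ : 0 < σ₂)
    (f : Ed d → ℝ) (hf : Measurable f)
    (p : ℝ) (hp : 1 < p) (hα : 1 / p < σ₁ ^ 2 / σ₂ ^ 2)
    (hfLp : MemLp f (ENNReal.ofReal (2 * p)) (gaussMeasure d σ₁)) :
    ∫ x, (f x - ∫ y, f y ∂(gaussMeasure d σ₂)) ^ 2 ∂(gaussMeasure d σ₂)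
      ≤ (σ₁ ^ 2 / σ₂ ^ 2) ^ ((d : ℝ) / 2) *
          ((p - 1) / (p * (σ₁ ^ 2 / σ₂ ^ 2) - 1)) ^ ((d : ℝ) * (p - 1) / (2 * p)) *
        (∫ x, |f x - ∫ y, f y ∂(gaussMeasure d σ₁)| ^ (2 * p)
            ∂(gaussMeasure d σ₁)) ^ (1 / p) := by
  have := isProbabilityMeasure_gaussMeasure d h₁
  have := isProbabilityMeasure_gaussMeasure d h₂
  have hpα : 1 < p * (σ₁ ^ 2 / σ₂ ^ 2) := by rwa [div_lt_iff₀' (by linarith)] at hα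
  set m₁ := ∫ y, f y ∂gaussMeasure d σ₁
  calc _ ≤ ∫ x, (f x - m₁) ^ 2 ∂gaussMeasure d σ₂ :=
        integral_sub_integral_sq_le hf.aestronglyMeasurable m₁
    _ ≤ _ := integral_le_of_lintegral_ofReal_le (ae_of_all _ fun _ => sq_nonneg _) (by fun_prop)
        (by positivity) (lintegral_ofReal_sq_gaussMeasure_le d h₁ h₂ hp hpα
          (g := fun x => f x - m₁) (hfLp.sub (memLp_const m₁)))
end
end

section
/- Let λ be a σ-finite measure on a measurable space, and let μ, ν be probability measures absolutely continuous with respect to λ with finite relative entropies KL(μ‖λ) < ∞ and KL(ν‖λ) < ∞. Then the relative entropy is 1-strongly convex with respect to the total variation norm: for every t ∈ [0,1], KL((1−t)μ + tν ‖ λ) ≤ (1−t)·KL(μ‖λ) + t·KL(ν‖λ) − (t(1−t)/2)·‖μ − ν‖²_TV. -/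
open MeasureTheory

noncomputable section

/-- The relative entropy (Kullback–Leibler divergence) `KL(μ‖λ) = ∫ log (dμ/dλ) dμ`,
as a real number (meaningful when `μ ≪ λ` and the integrand is `μ`-integrable). -/
def klReal {α : Type*} [MeasurableSpace α] (μ lam : Measure α) : ℝ :=
  ∫ x, Real.log ((μ.rnDeriv lam x).toReal) ∂μ

/-- The total variation norm `‖μ - ν‖_TV = |μ - ν|(univ)` of the difference of two finite
measures. -/
def tvNorm {α : Type*} [MeasurableSpace α] (μ ν : Measure α)
    [IsFiniteMeasure μ] [IsFiniteMeasure ν] : ℝ :=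
  ((μ.toSignedMeasure - ν.toSignedMeasure).totalVariation Set.univ).toReal

/-!
Write `f`, `g` for the densities of `μ`, `ν` with respect to `λ`, so that `h = (1 - t) f + t g` is
the density of `ρ = (1 - t) μ + t ν`. Since `h log h = (1 - t) f log h + t g log h` pointwise,
`KL(ρ‖λ) = (1 - t) KL(μ‖λ) + t KL(ν‖λ) - (1 - t) KL(μ‖ρ) - t KL(ν‖ρ)`. Pinsker's inequality gives
`KL(μ‖ρ) ≥ ‖μ - ρ‖²/2 = t² ‖μ - ν‖²/2` and `KL(ν‖ρ) ≥ (1 - t)² ‖μ - ν‖²/2`, and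
`(1 - t) t² + t (1 - t)² = t (1 - t)`. Pinsker's inequality itself follows from Cauchy–Schwarz
against the weight `f + 2h` and the scalar inequality `3 (r - 1)² ≤ 2 (r + 2) (r log r - r + 1)`.
-/

open Real Set InformationTheory

lemma apply_one_le_of_hasDerivAt {f f' : ℝ → ℝ} (hf : ∀ x, 0 < x → HasDerivAt f (f' x) x)
    (hf'_nonpos : ∀ x, 0 < x → x ≤ 1 → f' x ≤ 0) (hf'_nonneg : ∀ x, 1 ≤ x → 0 ≤ f' x)
    {r : ℝ} (hr : 0 < r) : f 1 ≤ f r := by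
  have hcont : ContinuousOn f (Ioi 0) := fun x hx => (hf x hx).continuousAt.continuousWithinAt
  rcases le_total r 1 with hr1 | hr1
  · refine antitoneOn_of_hasDerivWithinAt_nonpos (f' := f') (convex_Icc r 1)
      (hcont.mono fun x hx => hr.trans_le hx.1) (fun x hx => ?_) (fun x hx => ?_)
      ⟨le_rfl, hr1⟩ ⟨hr1, le_rfl⟩ hr1 <;> rw [interior_Icc] at hx
    exacts [(hf x (hr.trans hx.1)).hasDerivWithinAt, hf'_nonpos x (hr.trans hx.1) hx.2.le]
  · refine monotoneOn_of_hasDerivWithinAt_nonneg (f' := f') (convex_Icc 1 r)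
      (hcont.mono fun x hx => one_pos.trans_le hx.1) (fun x hx => ?_) (fun x hx => ?_)
      ⟨le_rfl, hr1⟩ ⟨hr1, le_rfl⟩ hr1 <;> rw [interior_Icc] at hx
    exacts [(hf x (one_pos.trans hx.1)).hasDerivWithinAt, hf'_nonneg x hx.1.le]

lemma monotoneOn_add_one_mul_log_sub :
    MonotoneOn (fun r => (r + 1) * log r - 2 * (r - 1)) (Ioi 0) := by
  have hderiv : ∀ x, 0 < x → HasDerivAt (fun r => (r + 1) * log r - 2 * (r - 1))
      (log x + x⁻¹ - 1) x := by
    intro x hx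
    refine ((((hasDerivAt_id' x).add_const 1).mul (hasDerivAt_log hx.ne')).sub
      (((hasDerivAt_id' x).sub_const 1).const_mul 2)).congr_deriv ?_
    field_simp
    ring
  refine monotoneOn_of_hasDerivWithinAt_nonneg (f' := fun x => log x + x⁻¹ - 1) (convex_Ioi 0)
    (fun x hx => (hderiv x hx).continuousAt.continuousWithinAt) (fun x hx => ?_) (fun x hx => ?_)
    <;> rw [interior_Ioi] at hx
  · exact (hderiv x hx).hasDerivWithinAt
  · have := log_le_sub_one_of_pos (inv_pos.2 hx)
    rw [log_inv] at this
    linarith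

lemma three_mul_sq_sub_one_le_klFun {r : ℝ} (hr : 0 ≤ r) :
    3 * (r - 1) ^ 2 ≤ 2 * (r + 2) * klFun r := by
  rcases hr.eq_or_lt with rfl | hr
  · norm_num [klFun_zero]
  set K : ℝ → ℝ := fun r => (r + 1) * log r - 2 * (r - 1)
  have hderiv : ∀ x, 0 < x → HasDerivAt (fun r => 2 * (r + 2) * klFun r - 3 * (r - 1) ^ 2)
      (4 * K x) x := by
    intro x hx
    refine ((((hasDerivAt_id' x).add_const 2).const_mul 2).mul (hasDerivAt_klFun hx.ne')).sub
      ((((hasDerivAt_id' x).sub_const 1).pow 2).const_mul 3) |>.congr_deriv ?_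
    simp only [K, klFun_apply]
    ring
  have hK_mono : MonotoneOn K (Ioi 0) := monotoneOn_add_one_mul_log_sub
  have hK1 : K 1 = 0 := by simp [K]
  have h1 : (1 : ℝ) ∈ Ioi 0 := mem_Ioi.2 one_pos
  have := apply_one_le_of_hasDerivAt hderiv
    (fun x hx hx1 => by linarith [hK_mono hx h1 hx1])
    (fun x hx1 => by linarith [hK_mono h1 (one_pos.trans_le hx1) hx1]) hr
  norm_num [klFun_one] at this
  linarith

lemma mul_klFun_div {x y : ℝ} (hy : y ≠ 0) :
    y * klFun (x / y) = x * log x - x * log y - x + y := by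
  rcases eq_or_ne x 0 with rfl | hx
  · simp [klFun_zero]
  rw [klFun_apply, log_div hx hy]
  field_simp
  ring

lemma three_mul_sq_sub_div_le {x y : ℝ} (hx : 0 ≤ x) (hy : 0 ≤ y) (hxy : y = 0 → x = 0) :
    3 * ((x - y) ^ 2 / (x + 2 * y)) ≤ 2 * (x * log x - x * log y - x + y) := by
  rcases hy.eq_or_lt with rfl | hy
  · simp [hxy rfl]
  rw [← mul_klFun_div hy.ne', mul_div_assoc', div_le_iff₀ (by positivity)]
  have key := mul_le_mul_of_nonneg_left (three_mul_sq_sub_one_le_klFun (div_nonneg hx hy.le))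
    (sq_nonneg y)
  calc 3 * (x - y) ^ 2 = y ^ 2 * (3 * (x / y - 1) ^ 2) := by field_simp
    _ ≤ y ^ 2 * (2 * (x / y + 2) * klFun (x / y)) := key
    _ = 2 * (y * klFun (x / y)) * (x + 2 * y) := by field_simp

section

variable {α : Type*} [MeasurableSpace α] {lam μ ν : Measure α}

lemma sq_integral_sqrt_mul_le {f g : α → ℝ} (hf : ∀ x, 0 ≤ f x) (hg : ∀ x, 0 ≤ g x)
    (hfi : Integrable f μ) (hgi : Integrable g μ) :
    (∫ x, √(f x * g x) ∂μ) ^ 2 ≤ (∫ x, f x ∂μ) * ∫ x, g x ∂μ := by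
  have hsqrt_memLp : ∀ h : α → ℝ, (∀ x, 0 ≤ h x) → Integrable h μ →
      MemLp (fun x => √(h x)) (ENNReal.ofReal 2) μ := fun h hh hhi => by
    rw [ENNReal.ofReal_ofNat,
      memLp_two_iff_integrable_sq hhi.aemeasurable.sqrt.aestronglyMeasurable]
    exact hhi.congr (.of_forall fun x => (sq_sqrt (hh x)).symm)
  have hsq : ∀ h : α → ℝ, (∀ x, 0 ≤ h x) → ∫ x, √(h x) ^ (2 : ℝ) ∂μ = ∫ x, h x ∂μ := by
    intro h hh
    congr 1 with x
    rw [rpow_two, sq_sqrt (hh x)]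
  have holder := integral_mul_le_Lp_mul_Lq_of_nonneg Real.HolderConjugate.two_two
    (.of_forall fun x => sqrt_nonneg (f x)) (.of_forall fun x => sqrt_nonneg (g x))
    (hsqrt_memLp f hf hfi) (hsqrt_memLp g hg hgi)
  simp only [← sqrt_mul (hf _), hsq f hf, hsq g hg, ← sqrt_eq_rpow] at holder
  calc (∫ x, √(f x * g x) ∂μ) ^ 2 ≤ (√(∫ x, f x ∂μ) * √(∫ x, g x ∂μ)) ^ 2 :=
        pow_le_pow_left₀ (integral_nonneg fun x => sqrt_nonneg _) holder 2
    _ = (∫ x, f x ∂μ) * ∫ x, g x ∂μ := by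
        rw [mul_pow, sq_sqrt (integral_nonneg hf), sq_sqrt (integral_nonneg hg)]

lemma integrable_mul_log_of_const_mul_le {P H : α → ℝ} {c : ℝ} (hc : 0 < c)
    (hP : ∀ x, 0 ≤ P x) (hPH : ∀ x, c * P x ≤ H x) (hPi : Integrable P μ) (hHi : Integrable H μ)
    (hPlogP : Integrable (fun x => P x * log (P x)) μ) :
    Integrable (fun x => P x * log (H x)) μ := by
  refine integrable_of_le_of_le (g₁ := fun x => P x * log c + P x * log (P x))
    (g₂ := fun x => P x * log (P x) + H x - P x) ?_ (.of_forall fun x => ?_)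
    (.of_forall fun x => ?_) ((hPi.mul_const _).add hPlogP) ((hPlogP.add hHi).sub hPi)
  · have := hPi.aemeasurable; have := hHi.aemeasurable
    exact (by fun_prop : AEMeasurable (fun x => P x * log (H x)) μ).aestronglyMeasurable
  all_goals dsimp only; rcases (hP x).eq_or_lt with hPx | hPx
  · simp [← hPx]
  · have hHx : 0 < H x := (mul_pos hc hPx).trans_le (hPH x)
    rw [← mul_add, ← log_mul hc.ne' hPx.ne']
    exact mul_le_mul_of_nonneg_left (log_le_log (mul_pos hc hPx) (hPH x)) hPx.le
  · have := hPH x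
    rw [← hPx] at this ⊢
    simpa using this
  · have hHx : 0 < H x := (mul_pos hc hPx).trans_le (hPH x)
    have := mul_nonneg hHx.le (klFun_nonneg (div_nonneg hPx.le hHx.le))
    rw [mul_klFun_div hHx.ne'] at this
    linarith

/-- Pinsker's inequality for probability densities. -/
theorem sq_integral_abs_sub_le_integral_mul_log_sub {F H : α → ℝ} (hF : ∀ x, 0 ≤ F x)
    (hH : ∀ x, 0 ≤ H x) (hHF : ∀ x, H x = 0 → F x = 0) (hFi : Integrable F μ) (hHi : Integrable H μ)
    (hF1 : ∫ x, F x ∂μ = 1) (hH1 : ∫ x, H x ∂μ = 1)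
    (hFlogF : Integrable (fun x => F x * log (F x)) μ)
    (hFlogH : Integrable (fun x => F x * log (H x)) μ) :
    (∫ x, |F x - H x| ∂μ) ^ 2 ≤ 2 * (∫ x, F x * log (F x) ∂μ - ∫ x, F x * log (H x) ∂μ) := by
  set w : α → ℝ := fun x => F x + 2 * H x
  set p : α → ℝ := fun x => (F x - H x) ^ 2 / w x
  have hw : ∀ x, 0 ≤ w x := fun x => show 0 ≤ F x + 2 * H x by linarith [hF x, hH x]
  have hp : ∀ x, 0 ≤ p x := fun x => div_nonneg (sq_nonneg _) (hw x)
  have hp_le : ∀ x, 3 * p x ≤ 2 * (F x * log (F x) - F x * log (H x) - F x + H x) :=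
    fun x => three_mul_sq_sub_div_le (hF x) (hH x) (hHF x)
  have hDi : Integrable (fun x => F x * log (F x) - F x * log (H x)) μ := hFlogF.sub hFlogH
  have hKi : Integrable (fun x => F x * log (F x) - F x * log (H x) - F x) μ := hDi.sub hFi
  have hgi : Integrable (fun x => F x * log (F x) - F x * log (H x) - F x + H x) μ :=
    hKi.add hHi
  have hwi : Integrable w μ := hFi.add (hHi.const_mul 2)
  have hpi : Integrable p μ := by
    refine (hgi.const_mul (2 / 3)).mono' ?_ (.of_forall fun x => ?_)
    · have := hFi.aemeasurable; have := hHi.aemeasurable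
      exact (by fun_prop : AEMeasurable p μ).aestronglyMeasurable
    · rw [norm_of_nonneg (hp x)]
      linarith [hp_le x]
  have habs : ∀ x, |F x - H x| = √(p x * w x) := fun x => by
    rcases (hw x).eq_or_lt with hw0 | hw0
    · obtain ⟨hFx, hHx⟩ : F x = 0 ∧ H x = 0 := by
        constructor <;> linarith [hF x, hH x, show w x = F x + 2 * H x from rfl]
      simp [p, w, hFx, hHx]
    · rw [div_mul_cancel₀ _ hw0.ne', sqrt_sq_eq_abs]
  calc (∫ x, |F x - H x| ∂μ) ^ 2 = (∫ x, √(p x * w x) ∂μ) ^ 2 := by simp_rw [habs]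
    _ ≤ (∫ x, p x ∂μ) * ∫ x, w x ∂μ := sq_integral_sqrt_mul_le hp hw hpi hwi
    _ = ∫ x, 3 * p x ∂μ := by
        rw [integral_add hFi (hHi.const_mul 2), integral_const_mul, integral_const_mul, hF1, hH1]
        ring
    _ ≤ ∫ x, 2 * (F x * log (F x) - F x * log (H x) - F x + H x) ∂μ :=
        integral_mono (hpi.const_mul 3) (hgi.const_mul 2) hp_le
    _ = 2 * (∫ x, F x * log (F x) ∂μ - ∫ x, F x * log (H x) ∂μ) := by
        rw [integral_const_mul, integral_add hKi hHi, integral_sub hDi hFi,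
          integral_sub hFlogF hFlogH, hF1, hH1]
        ring

theorem integral_mul_log_strongly_convex {F G : α → ℝ} (hF : ∀ x, 0 ≤ F x)
    (hG : ∀ x, 0 ≤ G x) (hFi : Integrable F μ) (hGi : Integrable G μ)
    (hF1 : ∫ x, F x ∂μ = 1) (hG1 : ∫ x, G x ∂μ = 1)
    (hFlogF : Integrable (fun x => F x * log (F x)) μ)
    (hGlogG : Integrable (fun x => G x * log (G x)) μ) {t : ℝ} (ht0 : 0 < t) (ht1 : t < 1) :
    ∫ x, ((1 - t) * F x + t * G x) * log ((1 - t) * F x + t * G x) ∂μ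
      ≤ (1 - t) * ∫ x, F x * log (F x) ∂μ + t * ∫ x, G x * log (G x) ∂μ
        - t * (1 - t) / 2 * (∫ x, |F x - G x| ∂μ) ^ 2 := by
  set H : α → ℝ := fun x => (1 - t) * F x + t * G x
  set T := ∫ x, |F x - G x| ∂μ
  have hs0 : 0 < 1 - t := sub_pos.2 ht1
  have hFH : ∀ x, (1 - t) * F x ≤ H x :=
    fun x => le_add_of_nonneg_right (mul_nonneg ht0.le (hG x))
  have hGH : ∀ x, t * G x ≤ H x := fun x => le_add_of_nonneg_left (mul_nonneg hs0.le (hF x))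
  have hH : ∀ x, 0 ≤ H x := fun x => (mul_nonneg hs0.le (hF x)).trans (hFH x)
  have hHi : Integrable H μ := (hFi.const_mul _).add (hGi.const_mul _)
  have hH1 : ∫ x, H x ∂μ = 1 := by
    rw [integral_add (hFi.const_mul _) (hGi.const_mul _), integral_const_mul, integral_const_mul,
      hF1, hG1]
    ring
  have hFlogH := integrable_mul_log_of_const_mul_le hs0 hF hFH hFi hHi hFlogF
  have hGlogH := integrable_mul_log_of_const_mul_le ht0 hG hGH hGi hHi hGlogG
  have hpinskerF := sq_integral_abs_sub_le_integral_mul_log_sub hF hH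
    (fun x hx => by nlinarith [hFH x, hF x]) hFi hHi hF1 hH1 hFlogF hFlogH
  have hpinskerG := sq_integral_abs_sub_le_integral_mul_log_sub hG hH
    (fun x hx => by nlinarith [hGH x, hG x]) hGi hHi hG1 hH1 hGlogG hGlogH
  have hFH_abs : ∫ x, |F x - H x| ∂μ = t * T := by
    rw [← integral_const_mul]
    congr 1 with x
    rw [show F x - H x = t * (F x - G x) by ring, abs_mul, abs_of_pos ht0]
  have hGH_abs : ∫ x, |G x - H x| ∂μ = (1 - t) * T := by
    rw [← integral_const_mul]
    congr 1 with x
    rw [show G x - H x = (1 - t) * -(F x - G x) by ring, abs_mul, abs_neg, abs_of_pos hs0]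
  calc ∫ x, H x * log (H x) ∂μ
      = (1 - t) * ∫ x, F x * log (H x) ∂μ + t * ∫ x, G x * log (H x) ∂μ := by
        rw [← integral_const_mul, ← integral_const_mul,
          ← integral_add (hFlogH.const_mul _) (hGlogH.const_mul _)]
        congr 1 with x
        ring
    _ ≤ (1 - t) * (∫ x, F x * log (F x) ∂μ - (t * T) ^ 2 / 2)
        + t * (∫ x, G x * log (G x) ∂μ - ((1 - t) * T) ^ 2 / 2) := by
        rw [hFH_abs] at hpinskerF
        rw [hGH_abs] at hpinskerG
        gcongr <;> linarith
    _ = _ := by ring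

lemma klReal_eq_integral_rnDeriv_mul_log [SigmaFinite lam] [IsFiniteMeasure μ] (hμ : μ ≪ lam) :
    klReal μ lam = ∫ x, (μ.rnDeriv lam x).toReal * log (μ.rnDeriv lam x).toReal ∂lam :=
  (integral_rnDeriv_mul_log hμ).symm

lemma toReal_rnDeriv_smul_add_smul [SigmaFinite lam] [IsFiniteMeasure μ]
    [IsFiniteMeasure ν] {a b : ℝ} (ha : 0 ≤ a) (hb : 0 ≤ b) :
    (fun x => ((ENNReal.ofReal a • μ + ENNReal.ofReal b • ν).rnDeriv lam x).toReal)
      =ᵐ[lam] fun x => a * (μ.rnDeriv lam x).toReal + b * (ν.rnDeriv lam x).toReal := by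
  have := μ.smul_finite (ENNReal.ofReal_ne_top (r := a))
  have := ν.smul_finite (ENNReal.ofReal_ne_top (r := b))
  filter_upwards [Measure.rnDeriv_add' (ENNReal.ofReal a • μ) (ENNReal.ofReal b • ν) lam,
    Measure.rnDeriv_smul_left_of_ne_top' μ lam ENNReal.ofReal_ne_top (r := ENNReal.ofReal a),
    Measure.rnDeriv_smul_left_of_ne_top' ν lam ENNReal.ofReal_ne_top (r := ENNReal.ofReal b),
    μ.rnDeriv_lt_top lam, ν.rnDeriv_lt_top lam] with x hadd hμx hνx hμ_lt hν_lt
  rw [hadd, Pi.add_apply, hμx, hνx]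
  simp only [Pi.smul_apply, smul_eq_mul]
  rw [ENNReal.toReal_add (by finiteness) (by finiteness), ENNReal.toReal_mul, ENNReal.toReal_mul,
    ENNReal.toReal_ofReal ha, ENNReal.toReal_ofReal hb]

lemma toSignedMeasure_eq_withDensityᵥ_rnDeriv [SigmaFinite lam] [IsFiniteMeasure μ]
    (hμ : μ ≪ lam) :
    μ.toSignedMeasure = lam.withDensityᵥ fun x => (μ.rnDeriv lam x).toReal := by
  ext s hs
  rw [withDensityᵥ_apply Measure.integrable_toReal_rnDeriv hs,
    Measure.setIntegral_toReal_rnDeriv' hμ hs, Measure.toSignedMeasure_apply_measurable hs,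
    measureReal_def]

lemma totalVariation_withDensityᵥ {f : α → ℝ} (hf : Measurable f) (hfi : Integrable f μ) :
    SignedMeasure.totalVariation (μ.withDensityᵥ f)
      = μ.withDensity fun x => ENNReal.ofReal |f x| := by
  have hjordan := SignedMeasure.toJordanDecomposition_eq_of_eq_add_withDensity hf hfi
    VectorMeasure.MutuallySingular.zero_left (zero_add _).symm
  rw [SignedMeasure.totalVariation, hjordan]
  simp only [SignedMeasure.toJordanDecomposition_zero, JordanDecomposition.zero_posPart,
    JordanDecomposition.zero_negPart, zero_add]
  rw [← withDensity_add_left (by fun_prop)]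
  congr 1 with x
  rcases le_total 0 (f x) with h | h
  · simp [abs_of_nonneg h, h]
  · simp [abs_of_nonpos h, h]

lemma tvNorm_eq_integral_abs_sub [SigmaFinite lam]
    [IsFiniteMeasure μ] [IsFiniteMeasure ν] (hμ : μ ≪ lam) (hν : ν ≪ lam) :
    tvNorm μ ν = ∫ x, |(μ.rnDeriv lam x).toReal - (ν.rnDeriv lam x).toReal| ∂lam := by
  have hFi := Measure.integrable_toReal_rnDeriv (μ := μ) (ν := lam)
  have hGi := Measure.integrable_toReal_rnDeriv (μ := ν) (ν := lam)
  rw [tvNorm, toSignedMeasure_eq_withDensityᵥ_rnDeriv hμ,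
    toSignedMeasure_eq_withDensityᵥ_rnDeriv hν, ← withDensityᵥ_sub' hFi hGi, totalVariation_withDensityᵥ (by fun_prop) (hFi.sub' hGi),
    withDensity_apply _ MeasurableSet.univ, Measure.restrict_univ,
    integral_eq_lintegral_of_nonneg_ae (.of_forall fun x => abs_nonneg _) (by fun_prop)]

end

/-- **1-strong convexity of the relative entropy with respect to the total variation norm**:
for probability measures `μ, ν ≪ λ` with finite relative entropy and `t ∈ [0,1]`,
`KL((1-t)μ + tν ‖ λ) ≤ (1-t) KL(μ‖λ) + t KL(ν‖λ) - (t(1-t)/2) ‖μ - ν‖²_TV`. -/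
theorem klReal_strongly_convex_tv {α : Type*} [MeasurableSpace α]
    (lam μ ν : Measure α) [SigmaFinite lam]
    [IsProbabilityMeasure μ] [IsProbabilityMeasure ν]
    (hμ : μ ≪ lam) (hν : ν ≪ lam)
    (hμint : Integrable (fun x => Real.log ((μ.rnDeriv lam x).toReal)) μ)
    (hνint : Integrable (fun x => Real.log ((ν.rnDeriv lam x).toReal)) ν)
    (t : ℝ) (ht0 : 0 ≤ t) (ht1 : t ≤ 1) :
    klReal (ENNReal.ofReal (1 - t) • μ + ENNReal.ofReal t • ν) lam
      ≤ (1 - t) * klReal μ lam + t * klReal ν lam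
        - t * (1 - t) / 2 * tvNorm μ ν ^ 2 := by
  rcases ht0.eq_or_lt with rfl | ht0
  · simp
  rcases ht1.eq_or_lt with rfl | ht1
  · simp
  have := μ.smul_finite (ENNReal.ofReal_ne_top (r := 1 - t))
  have := ν.smul_finite (ENNReal.ofReal_ne_top (r := t))
  have hmix : ENNReal.ofReal (1 - t) • μ + ENNReal.ofReal t • ν ≪ lam :=
    (hμ.smul_left _).add_left (hν.smul_left _)
  rw [klReal_eq_integral_rnDeriv_mul_log hmix, klReal_eq_integral_rnDeriv_mul_log hμ,
    klReal_eq_integral_rnDeriv_mul_log hν, tvNorm_eq_integral_abs_sub hμ hν]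
  refine (integral_congr_ae ((toReal_rnDeriv_smul_add_smul (sub_nonneg.2 ht1.le) ht0.le).fun_comp
    fun y => y * log y)).trans_le ?_
  exact integral_mul_log_strongly_convex (fun _ => ENNReal.toReal_nonneg)
    (fun _ => ENNReal.toReal_nonneg) Measure.integrable_toReal_rnDeriv
    Measure.integrable_toReal_rnDeriv (by rw [Measure.integral_toReal_rnDeriv hμ, probReal_univ])
    (by rw [Measure.integral_toReal_rnDeriv hν, probReal_univ])
    ((integrable_rnDeriv_mul_log_iff hμ).2 hμint) ((integrable_rnDeriv_mul_log_iff hν).2 hνint)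
    ht0 ht1
end
end
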